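/- Let a ∈ ℓ^∞ be periodic with period N and suppose there exist indices i ≠ j in {1,...,N} with |a_i| ≠ |a_j|. Then r(T_a) < (1/N) Σ_{k=1}^N |a_k| ≤ w(T_a) < max{|a_1|,...,|a_N|}; in particular T_a is neither normaloid nor convexoid. -/

import Mathlib

open Filter Finset Topology

/-- The numerical range of the weighted forward shift `T_a` on `ℓ²`:
values `⟨T_a x, x⟩ = ∑ a_k x_k conj (x_{k+1})` over unit vectors `x ∈ ℓ²`. -/
noncomputable def numRange (a : ℕ → ℂ) : Set ℂ :=
  {z | ∃ x : ℕ → ℂ, (∑' k, ‖x k‖ ^ 2) = (1 : ℝ) ∧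
    z = ∑' k, a k * x k * (starRingEnd ℂ) (x (k + 1))}

/-- The numerical radius `w(T_a)` of the weighted forward shift. -/
noncomputable def numRad (a : ℕ → ℂ) : ℝ := sSup ((fun z : ℂ => ‖z‖) '' numRange a)

/-- `a ∈ ℓ^∞`. -/
def IsBddSeq (a : ℕ → ℂ) : Prop := ∃ C : ℝ, ∀ k, ‖a k‖ ≤ C

/-- The uniform norm `‖a‖_∞`. -/
noncomputable def supNorm (a : ℕ → ℂ) : ℝ := ⨆ k, ‖a k‖

/-- `sup_{j ∈ ℕ} (1/n) ∑_{k=1}^n |a_{k+j-1}|` (0-based indexing). -/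
noncomputable def avgSup (a : ℕ → ℂ) (n : ℕ) : ℝ :=
  ⨆ j : ℕ, (∑ k ∈ Finset.range n, ‖a (k + j)‖) / n

/-- `sup_{j ∈ ℕ} (∏_{k=1}^n |a_{k+j-1}|)^{1/n}` (0-based indexing). -/
noncomputable def prodSup (a : ℕ → ℂ) (n : ℕ) : ℝ :=
  ⨆ j : ℕ, (∏ k ∈ Finset.range n, ‖a (k + j)‖) ^ ((1 : ℝ) / n)

set_option maxHeartbeats 1000000


lemma per_mul {α : Type*} (f : ℕ → α) (N : ℕ) (h : ∀ k, f (k + N) = f k) :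
    ∀ (n k : ℕ), f (k + n * N) = f k := by
  intro n
  induction n with
  | zero => simp
  | succ n ih =>
    intro k
    have : k + (n + 1) * N = (k + n * N) + N := by ring
    rw [this, h, ih]

lemma per_mod {α : Type*} (f : ℕ → α) (N : ℕ) (h : ∀ k, f (k + N) = f k) (k : ℕ) :
    f k = f (k % N) := by
  conv_lhs => rw [← Nat.mod_add_div k N, mul_comm]
  rw [per_mul f N h]

lemma per_sum (b : ℕ → ℝ) (N : ℕ) (h : ∀ k, b (k + N) = b k) (n : ℕ) :
    ∑ k ∈ Finset.range (n * N), b k = n * ∑ k ∈ Finset.range N, b k := by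
  induction n with
  | zero => simp
  | succ n ih =>
    rw [add_mul, one_mul, Finset.sum_range_add, ih]
    have : ∀ x, b (n * N + x) = b x := by
      intro x; rw [show n * N + x = x + n * N from by ring]; exact per_mul b N h n x
    simp only [this]; push_cast; ring


noncomputable def phase (a : ℕ → ℂ) : ℕ → ℂ
  | 0 => 1
  | (k+1) => (if a k = 0 then 1 else a k / (‖a k‖ : ℂ)) * phase a k

lemma phase_norm (a : ℕ → ℂ) : ∀ k, ‖phase a k‖ = 1 := by
  intro k
  induction k with
  | zero => simp [phase]
  | succ k ih =>
    rw [phase, norm_mul, ih, mul_one]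
    split_ifs with h
    · simp
    · rw [norm_div, Complex.norm_real, Real.norm_eq_abs, abs_of_nonneg (norm_nonneg _),
        div_self (norm_ne_zero_iff.mpr h)]

lemma phase_key (a : ℕ → ℂ) (k : ℕ) :
    a k * phase a k * (starRingEnd ℂ) (phase a (k+1)) = (‖a k‖ : ℂ) := by
  have hpp : phase a k * (starRingEnd ℂ) (phase a k) = 1 := by
    rw [Complex.mul_conj]
    norm_cast
    rw [Complex.normSq_eq_norm_sq]
    have h1 := phase_norm a k
    rw [h1]; norm_num
  rw [phase]
  split_ifs with h
  · simp [h]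
  · rw [map_mul, map_div₀, Complex.conj_ofReal]
    have hne : (‖a k‖ : ℂ) ≠ 0 := by
      simpa using norm_ne_zero_iff.mpr h
    field_simp
    rw [show a k * phase a k * (starRingEnd ℂ) (a k) * (starRingEnd ℂ) (phase a k)
        = (a k * (starRingEnd ℂ) (a k)) * (phase a k * (starRingEnd ℂ) (phase a k)) from by ring,
      hpp, mul_one, Complex.mul_conj]
    norm_cast
    rw [Complex.normSq_eq_norm_sq]


lemma amgm_basic (b : ℕ → ℝ) (hb : ∀ k, 0 ≤ b k) (N : ℕ) (hN : 0 < N) :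
    (∏ k ∈ Finset.range N, b k) ^ ((1 : ℝ) / N) ≤ (∑ k ∈ Finset.range N, b k) / N := by
  have h1 : ∑ _k ∈ Finset.range N, (1 : ℝ) / N = 1 := by
    rw [Finset.sum_const, Finset.card_range, nsmul_eq_mul]
    field_simp
  have := Real.geom_mean_le_arith_mean_weighted (Finset.range N) (fun _ => (1:ℝ)/N) b
    (fun i _ => by positivity) h1 (fun i _ => hb i)
  rw [Real.finset_prod_rpow _ _ (fun i _ => hb i)] at this
  calc (∏ k ∈ Finset.range N, b k) ^ ((1 : ℝ) / N) ≤ ∑ i ∈ Finset.range N, 1 / (N:ℝ) * b i := this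
    _ = (∑ k ∈ Finset.range N, b k) / N := by rw [← Finset.mul_sum]; ring

lemma amgm_strict (b : ℕ → ℝ) (hb : ∀ k, 0 ≤ b k) (N : ℕ) (hN : 0 < N)
    (i j : ℕ) (hi : i < N) (hj : j < N) (hij : i ≠ j) (hne : b i ≠ b j) :
    (∏ k ∈ Finset.range N, b k) ^ ((1 : ℝ) / N) < (∑ k ∈ Finset.range N, b k) / N := by
  have hSpos : 0 < (∑ k ∈ Finset.range N, b k) / N := by
    apply div_pos _ (by exact_mod_cast hN)
    have h1 : b i ≤ ∑ k ∈ Finset.range N, b k :=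
      Finset.single_le_sum (fun k _ => hb k) (Finset.mem_range.mpr hi)
    have h2 : b j ≤ ∑ k ∈ Finset.range N, b k :=
      Finset.single_le_sum (fun k _ => hb k) (Finset.mem_range.mpr hj)
    rcases hne.lt_or_gt with h | h
    · exact lt_of_le_of_lt (hb i) (lt_of_lt_of_le h h2)
    · exact lt_of_le_of_lt (hb j) (lt_of_lt_of_le h h1)
  by_cases hz : ∃ k ∈ Finset.range N, b k = 0
  · rcases hz with ⟨k, hk, hk0⟩
    rw [Finset.prod_eq_zero hk hk0, Real.zero_rpow (by positivity)]
    exact hSpos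
  · push_neg at hz
    have hpos : ∀ k ∈ Finset.range N, 0 < b k := fun k hk => (hb k).lt_of_ne (Ne.symm (hz k hk))
    set m : ℝ := (b i + b j) / 2 with hm
    set b' : ℕ → ℝ := Function.update (Function.update b i m) j m with hb'
    have hmem_i : i ∈ (Finset.range N).erase j := Finset.mem_erase.mpr ⟨hij, Finset.mem_range.mpr hi⟩
    have hupd_i : ∀ k ∈ (Finset.range N).erase j, Function.update b i m k = b' k := by
      intro k hk
      rw [hb', Function.update_of_ne (Finset.mem_erase.mp hk).1]
    -- sums
    have hsum : ∑ k ∈ Finset.range N, b' k = ∑ k ∈ Finset.range N, b k := by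
      rw [← Finset.add_sum_erase _ b' (Finset.mem_range.mpr hj),
        ← Finset.add_sum_erase _ b (Finset.mem_range.mpr hj),
        ← Finset.add_sum_erase _ b' hmem_i, ← Finset.add_sum_erase _ b hmem_i]
      have e1 : b' j = m := by rw [hb']; simp [Function.update_self]
      have e2 : b' i = m := by
        rw [hb', Function.update_of_ne hij, Function.update_self]
      have e3 : ∑ k ∈ ((Finset.range N).erase j).erase i, b' k
          = ∑ k ∈ ((Finset.range N).erase j).erase i, b k := by
        apply Finset.sum_congr rfl
        intro k hk
        have hki : k ≠ i := (Finset.mem_erase.mp hk).1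
        have hkj : k ≠ j := (Finset.mem_erase.mp (Finset.mem_erase.mp hk).2).1
        rw [hb', Function.update_of_ne hkj, Function.update_of_ne hki]
      rw [e1, e2, e3, hm]; ring
    have hprod : ∏ k ∈ Finset.range N, b k < ∏ k ∈ Finset.range N, b' k := by
      rw [← Finset.mul_prod_erase _ b' (Finset.mem_range.mpr hj),
        ← Finset.mul_prod_erase _ b (Finset.mem_range.mpr hj),
        ← Finset.mul_prod_erase _ b' hmem_i, ← Finset.mul_prod_erase _ b hmem_i]
      have e1 : b' j = m := by rw [hb']; simp [Function.update_self]
      have e2 : b' i = m := by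
        rw [hb', Function.update_of_ne hij, Function.update_self]
      have e3 : ∏ k ∈ ((Finset.range N).erase j).erase i, b' k
          = ∏ k ∈ ((Finset.range N).erase j).erase i, b k := by
        apply Finset.prod_congr rfl
        intro k hk
        have hki : k ≠ i := (Finset.mem_erase.mp hk).1
        have hkj : k ≠ j := (Finset.mem_erase.mp (Finset.mem_erase.mp hk).2).1
        rw [hb', Function.update_of_ne hkj, Function.update_of_ne hki]
      rw [e1, e2, e3]
      have hrest : 0 < ∏ k ∈ ((Finset.range N).erase j).erase i, b k :=
        Finset.prod_pos (fun k hk =>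
          hpos k (Finset.mem_of_mem_erase (Finset.mem_of_mem_erase hk)))
      have hlt : b j * b i < m * m := by
        rw [hm]
        have := sq_nonneg (b i - b j)
        have h2 : (b i - b j) ^ 2 ≠ 0 := pow_ne_zero _ (sub_ne_zero.mpr hne)
        nlinarith [this.lt_of_ne (Ne.symm h2)]
      calc b j * (b i * ∏ k ∈ ((Finset.range N).erase j).erase i, b k)
          = (b j * b i) * ∏ k ∈ ((Finset.range N).erase j).erase i, b k := by ring
        _ < (m * m) * ∏ k ∈ ((Finset.range N).erase j).erase i, b k :=
            mul_lt_mul_of_pos_right hlt hrest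
        _ = m * (m * ∏ k ∈ ((Finset.range N).erase j).erase i, b k) := by ring
    have hb'nn : ∀ k, 0 ≤ b' k := by
      have hm0 : 0 ≤ m := by
        rw [hm]; have := hb i; have := hb j; linarith
      intro k
      rcases eq_or_ne k j with hkj | hkj
      · rw [hb', hkj, Function.update_self]; exact hm0
      · rw [hb', Function.update_of_ne hkj]
        rcases eq_or_ne k i with hki | hki
        · rw [hki, Function.update_self]; exact hm0
        · rw [Function.update_of_ne hki]; exact hb k
    calc (∏ k ∈ Finset.range N, b k) ^ ((1 : ℝ) / N)
        < (∏ k ∈ Finset.range N, b' k) ^ ((1 : ℝ) / N) := by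
          apply Real.rpow_lt_rpow (Finset.prod_nonneg (fun k _ => hb k)) hprod
          positivity
      _ ≤ (∑ k ∈ Finset.range N, b' k) / N := amgm_basic b' hb'nn N hN
      _ = (∑ k ∈ Finset.range N, b k) / N := by rw [hsum]

lemma frac_bound (b w1 w2 t1 t2 : ℝ) (hw1 : 0 < w1) (hw2 : 0 < w2) (hb : 0 ≤ b) :
    b * t1 * t2 ≤ b * w2 / (2*w1) * t1^2 + b * w1 / (2*w2) * t2^2 := by
  rw [div_mul_eq_mul_div, div_mul_eq_mul_div, div_add_div _ _ (by positivity) (by positivity),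
    le_div_iff₀ (by positivity)]
  nlinarith [mul_nonneg hb (sq_nonneg (w2*t1 - w1*t2)), mul_pos hw1 hw2]

lemma numRange_bound (a : ℕ → ℂ) (w : ℕ → ℝ) (hw : ∀ k, 0 < w k) (B C : ℝ)
    (hC : ∀ k, ‖a k‖ * w (k+1) / (2 * w k) ≤ C ∧ ‖a k‖ * w k / (2 * w (k+1)) ≤ C)
    (h0 : ‖a 0‖ * w 1 / (2 * w 0) ≤ B)
    (hk : ∀ k, ‖a (k+1)‖ * w (k+2) / (2 * w (k+1)) + ‖a k‖ * w k / (2 * w (k+1)) ≤ B) :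
    ∀ z ∈ numRange a, ‖z‖ ≤ B := by
  rintro z ⟨x, hx1, rfl⟩
  set t : ℕ → ℝ := fun k => ‖x k‖ with ht
  have ht0 : ∀ k, 0 ≤ t k := fun k => norm_nonneg _
  have hsum2 : Summable (fun k => t k ^ 2) := by
    by_contra h
    rw [tsum_eq_zero_of_not_summable h] at hx1
    exact one_ne_zero hx1.symm
  have hsum2' : Summable (fun k => t (k+1) ^ 2) := (summable_nat_add_iff 1).mpr hsum2
  set c : ℕ → ℝ := fun k => ‖a k‖ * w (k+1) / (2 * w k) with hc
  set d : ℕ → ℝ := fun k => ‖a k‖ * w k / (2 * w (k+1)) with hd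
  have hcnn : ∀ k, 0 ≤ c k := fun k => by
    have := hw k; have := hw (k+1); have := norm_nonneg (a k); positivity
  have hdnn : ∀ k, 0 ≤ d k := fun k => by
    have := hw k; have := hw (k+1); have := norm_nonneg (a k); positivity
  set f : ℕ → ℂ := fun k => a k * x k * (starRingEnd ℂ) (x (k + 1)) with hf
  set g : ℕ → ℝ := fun k => c k * t k ^ 2 + d k * t (k+1) ^ 2 with hg
  -- termwise bound
  have hfg : ∀ k, ‖f k‖ ≤ g k := by
    intro k
    have hnf : ‖f k‖ = ‖a k‖ * t k * t (k+1) := by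
      rw [hf]; simp [norm_mul, ht]
    rw [hnf]
    show ‖a k‖ * t k * t (k+1) ≤ c k * t k ^ 2 + d k * t (k+1) ^ 2
    exact frac_bound (‖a k‖) (w k) (w (k+1)) (t k) (t (k+1)) (hw k) (hw (k+1)) (norm_nonneg _)
  have hgnn : ∀ k, 0 ≤ g k := fun k =>
    add_nonneg (mul_nonneg (hcnn k) (sq_nonneg _)) (mul_nonneg (hdnn k) (sq_nonneg _))
  -- summability of g
  have hgle : ∀ k, g k ≤ C * t k ^ 2 + C * t (k+1) ^ 2 := by
    intro k
    exact add_le_add (mul_le_mul_of_nonneg_right (hC k).1 (sq_nonneg _))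
      (mul_le_mul_of_nonneg_right (hC k).2 (sq_nonneg _))
  have hsumCt : Summable (fun k => C * t k ^ 2 + C * t (k+1) ^ 2) :=
    (hsum2.mul_left C).add (hsum2'.mul_left C)
  have hgsum : Summable g := Summable.of_nonneg_of_le hgnn hgle hsumCt
  have hfnorm : Summable (fun k => ‖f k‖) :=
    Summable.of_nonneg_of_le (fun k => norm_nonneg _) hfg hgsum
  have hfsum : Summable f := hfnorm.of_norm
  -- pieces
  have hGsum : Summable (fun k => c k * t k ^ 2) :=
    Summable.of_nonneg_of_le (fun k => mul_nonneg (hcnn k) (sq_nonneg _))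
      (fun k => mul_le_mul_of_nonneg_right (hC k).1 (sq_nonneg _)) (hsum2.mul_left C)
  have hDsum : Summable (fun k => d k * t (k+1) ^ 2) :=
    Summable.of_nonneg_of_le (fun k => mul_nonneg (hdnn k) (sq_nonneg _))
      (fun k => mul_le_mul_of_nonneg_right (hC k).2 (sq_nonneg _)) (hsum2'.mul_left C)
  set s : ℕ → ℝ := fun k => if k = 0 then 0 else d (k-1) * t k ^ 2 with hs
  have hsD : (fun k => s (k+1)) = (fun k => d k * t (k+1) ^ 2) := by
    funext k; simp [hs]
  have hssum : Summable s := by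
    apply (summable_nat_add_iff 1).mp
    rw [hsD]; exact hDsum
  have htsD : ∑' k, d k * t (k+1) ^ 2 = ∑' k, s k := by
    rw [hssum.tsum_eq_zero_add, hsD]
    simp [hs]
  set e : ℕ → ℝ := fun k => c k * t k ^ 2 + s k with he
  have hesum : Summable e := hGsum.add hssum
  have heB : ∀ k, e k ≤ B * t k ^ 2 := by
    intro k
    match k with
    | 0 =>
      show c 0 * t 0 ^ 2 + s 0 ≤ B * t 0 ^ 2
      have hs0 : s 0 = 0 := by simp [hs]
      rw [hs0, add_zero]
      exact mul_le_mul_of_nonneg_right h0 (sq_nonneg _)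
    | (n+1) =>
      show c (n+1) * t (n+1) ^ 2 + s (n+1) ≤ B * t (n+1) ^ 2
      have hsn : s (n+1) = d n * t (n+1) ^ 2 := by simp [hs]
      rw [hsn, ← add_mul]
      exact mul_le_mul_of_nonneg_right (hk n) (sq_nonneg _)
  -- final chain
  have hBt : Summable (fun k => B * t k ^ 2) := hsum2.mul_left B
  calc ‖∑' k, f k‖ ≤ ∑' k, ‖f k‖ := norm_tsum_le_tsum_norm hfnorm
    _ ≤ ∑' k, g k := Summable.tsum_le_tsum hfg hfnorm hgsum
    _ = ∑' k, (c k * t k ^ 2) + ∑' k, (d k * t (k+1) ^ 2) := Summable.tsum_add hGsum hDsum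
    _ = ∑' k, (c k * t k ^ 2) + ∑' k, s k := by rw [htsD]
    _ = ∑' k, e k := (Summable.tsum_add hGsum hssum).symm
    _ ≤ ∑' k, B * t k ^ 2 := Summable.tsum_le_tsum heB hesum hBt
    _ = B * ∑' k, t k ^ 2 := tsum_mul_left
    _ = B := by rw [hx1, mul_one]


lemma avg_mem (a : ℕ → ℂ) (m : ℕ) (hm : 0 < m) :
    ∃ z ∈ numRange a, ‖z‖ = (∑ k ∈ Finset.range (m-1), ‖a k‖) / m := by
  set s : ℝ := (Real.sqrt m)⁻¹ with hsdef
  have hs0 : 0 ≤ s := by positivity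
  have hs2 : s ^ 2 = (m : ℝ)⁻¹ := by
    rw [hsdef, inv_pow, Real.sq_sqrt (by positivity)]
  set x : ℕ → ℂ := fun k => if k < m then (s : ℂ) * phase a k else 0 with hx
  have hxnorm : ∀ k, k < m → ‖x k‖ ^ 2 = (m : ℝ)⁻¹ := by
    intro k hk
    rw [hx]
    simp only [if_pos hk, norm_mul, Complex.norm_real, Real.norm_eq_abs,
      abs_of_nonneg hs0, phase_norm a k, mul_one]
    exact hs2
  have hxzero : ∀ k, ¬ (k < m) → x k = 0 := by
    intro k hk; rw [hx]; simp [if_neg hk]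
  have hA : (∑' k, ‖x k‖ ^ 2) = (1 : ℝ) := by
    rw [tsum_eq_sum (s := Finset.range m) (by
      intro k hk
      rw [hxzero k (by simpa using hk)]
      simp)]
    rw [Finset.sum_congr rfl (fun k hk => hxnorm k (Finset.mem_range.mp hk))]
    rw [Finset.sum_const, Finset.card_range, nsmul_eq_mul]
    field_simp
  set f : ℕ → ℂ := fun k => a k * x k * (starRingEnd ℂ) (x (k + 1)) with hf
  have hB : (∑' k, f k) = (((∑ k ∈ Finset.range (m-1), ‖a k‖) / m : ℝ) : ℂ) := by
    rw [tsum_eq_sum (s := Finset.range (m-1)) (by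
      intro k hk
      have hk' : ¬ (k + 1 < m) := by
        simp only [Finset.mem_range] at hk; omega
      rw [hf]
      simp only [hxzero (k+1) hk', map_zero, mul_zero])]
    have hterm : ∀ k ∈ Finset.range (m-1), f k = ((‖a k‖ * (s^2) : ℝ) : ℂ) := by
      intro k hk
      simp only [Finset.mem_range] at hk
      have h1 : k < m := by omega
      have h2 : k + 1 < m := by omega
      rw [hf]
      simp only [hx, if_pos h1, if_pos h2, map_mul, Complex.conj_ofReal]
      push_cast
      rw [show a k * ((s:ℂ) * phase a k) * ((s:ℂ) * (starRingEnd ℂ) (phase a (k+1)))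
          = (a k * phase a k * (starRingEnd ℂ) (phase a (k+1))) * ((s:ℂ) * s) from by ring,
        phase_key a k]
      ring
    rw [Finset.sum_congr rfl hterm, ← Complex.ofReal_sum]
    rw [← Finset.sum_mul]
    push_cast [hs2]
    ring
  refine ⟨∑' k, f k, ⟨x, hA, rfl⟩, ?_⟩
  rw [hB, Complex.norm_real, Real.norm_eq_abs, abs_of_nonneg (by positivity)]

theorem stmt11 (a : ℕ → ℂ) (N : ℕ) (hN : 0 < N) (hper : ∀ k, a (k + N) = a k)
    (i j : ℕ) (hi : i < N) (hj : j < N) (hij : i ≠ j) (hne : ‖a i‖ ≠ ‖a j‖) :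
    (∏ k ∈ Finset.range N, ‖a k‖) ^ ((1 : ℝ) / N) < (∑ k ∈ Finset.range N, ‖a k‖) / N ∧
    (∑ k ∈ Finset.range N, ‖a k‖) / N ≤ numRad a ∧
    numRad a < (Finset.range N).sup' (Finset.nonempty_range_iff.mpr hN.ne')
      (fun k => ‖a k‖) := by
  have hN2 : 2 ≤ N := by omega
  have hbper : ∀ k, ‖a (k + N)‖ = ‖a k‖ := fun k => by rw [hper]
  set M : ℝ := (Finset.range N).sup' (Finset.nonempty_range_iff.mpr hN.ne')
      (fun k => ‖a k‖) with hMdef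
  have hble : ∀ k, ‖a k‖ ≤ M := by
    intro k
    have h1 : ‖a k‖ = ‖a (k % N)‖ := per_mod (fun x => ‖a x‖) N hbper k
    rw [h1, hMdef]
    exact Finset.le_sup' (fun x => ‖a x‖) (Finset.mem_range.mpr (Nat.mod_lt _ hN))
  obtain ⟨k0, hk0N, hcM⟩ : ∃ k0, k0 < N ∧ ‖a k0‖ < M := by
    rcases hne.lt_or_gt with h | h
    · exact ⟨i, hi, lt_of_lt_of_le h (hble j)⟩
    · exact ⟨j, hj, lt_of_lt_of_le h (hble i)⟩
  set c : ℝ := ‖a k0‖ with hcdef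
  have hc0 : 0 ≤ c := norm_nonneg _
  have hM0 : 0 < M := lt_of_le_of_lt hc0 hcM
  set ε : ℝ := (M - c) / (2 * (c * N + M)) with hεdef
  have hεpos : 0 < ε := by
    apply div_pos (by linarith)
    have : (0:ℝ) ≤ c * N := by positivity
    linarith
  have hεq : ε * (2 * (c * N + M)) = M - c := by
    rw [hεdef]
    field_simp
  -- the weight function
  set t0 : ℕ := N - 1 - k0 with ht0
  set p : ℕ → ℕ := fun k => (k + t0) % N with hp
  have hpN : ∀ k, p k < N := fun k => Nat.mod_lt _ hN
  set W : ℕ → ℝ := fun r => 1 + ε * (r + 1) * ((N - r : ℕ) : ℝ) with hW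
  set w : ℕ → ℝ := fun k => W (p k) with hwdef
  have hWnn : ∀ r, 0 < W r := by
    intro r
    have : (0:ℝ) ≤ ε * (r + 1) * ((N - r : ℕ) : ℝ) := by positivity
    show 0 < 1 + ε * (r + 1) * ((N - r : ℕ) : ℝ)
    linarith
  have hw : ∀ k, 0 < w k := fun k => hWnn (p k)
  have hw1 : ∀ k, 1 ≤ w k := by
    intro k
    have : (0:ℝ) ≤ ε * (p k + 1) * ((N - p k : ℕ) : ℝ) := by positivity
    show 1 ≤ 1 + ε * (p k + 1) * ((N - p k : ℕ) : ℝ)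
    linarith
  have hwB : ∀ k, w k ≤ 1 + ε * N * N := by
    intro k
    have h1 : ((p k : ℝ) + 1) ≤ N := by
      have := hpN k
      push_cast
      exact_mod_cast Nat.succ_le_of_lt this
    have h2 : ((N - p k : ℕ) : ℝ) ≤ N := by
      exact_mod_cast Nat.sub_le N (p k)
    have h3 : (0:ℝ) ≤ (p k : ℝ) + 1 := by positivity
    have h4 : (0:ℝ) ≤ ((N - p k : ℕ) : ℝ) := by positivity
    have h5 : ((p k : ℝ) + 1) * ((N - p k : ℕ) : ℝ) ≤ (N:ℝ) * N :=
      mul_le_mul h1 h2 h4 (by positivity)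
    show 1 + ε * (p k + 1) * ((N - p k : ℕ) : ℝ) ≤ 1 + ε * N * N
    nlinarith [hεpos.le]
  have hwper : ∀ k, w (k + N) = w k := by
    intro k
    show W (p (k + N)) = W (p k)
    congr 1
    show (k + N + t0) % N = (k + t0) % N
    rw [show k + N + t0 = (k + t0) + N from by omega, Nat.add_mod_right]
  -- step lemmas for p
  have hstep : ∀ k, p (k + 1) = (p k + 1) % N := by
    intro k
    show (k + 1 + t0) % N = ((k + t0) % N + 1) % N
    rw [show k + 1 + t0 = (k + t0) + 1 from by omega, Nat.add_mod (k + t0) 1 N,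
      Nat.mod_eq_of_lt (show 1 < N by omega)]
  have hak0 : ∀ k, p k = N - 1 → ‖a k‖ = c := by
    intro k hk
    have hpk0 : p k0 = N - 1 := by
      show (k0 + t0) % N = N - 1
      rw [show k0 + t0 = N - 1 from by omega]
      exact Nat.mod_eq_of_lt (by omega)
    have hmod : k % N = k0 % N := by
      have h : (k + t0) % N = (k0 + t0) % N := by
        show p k = p k0
        rw [hk, hpk0]
      exact Nat.ModEq.add_right_cancel' t0 h
    have h1 : ‖a k‖ = ‖a (k % N)‖ := per_mod (fun x => ‖a x‖) N hbper k
    have h2 : ‖a k0‖ = ‖a (k0 % N)‖ := per_mod (fun x => ‖a x‖) N hbper k0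
    rw [hcdef, h1, h2, hmod]
  -- special values of W
  have hWN1 : W (N - 1) = 1 + ε * N := by
    show 1 + ε * ((N - 1 : ℕ) + 1 : ℝ) * ((N - (N - 1) : ℕ) : ℝ) = 1 + ε * N
    rw [show N - (N - 1) = 1 from by omega]
    rw [Nat.cast_sub (by omega : 1 ≤ N)]
    push_cast
    ring
  have hW0 : W 0 = 1 + ε * N := by
    show 1 + ε * ((0 : ℕ) + 1 : ℝ) * ((N - 0 : ℕ) : ℝ) = 1 + ε * N
    rw [Nat.sub_zero]
    push_cast
    ring
  have hW1 : W 1 = 1 + ε * 2 * ((N:ℝ) - 1) := by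
    show 1 + ε * ((1 : ℕ) + 1 : ℝ) * ((N - 1 : ℕ) : ℝ) = 1 + ε * 2 * ((N:ℝ) - 1)
    rw [Nat.cast_sub (by omega : 1 ≤ N)]
    push_cast
    ring
  have hWN2 : W (N - 2) = 1 + ε * 2 * ((N:ℝ) - 1) := by
    show 1 + ε * ((N - 2 : ℕ) + 1 : ℝ) * ((N - (N - 2) : ℕ) : ℝ) = 1 + ε * 2 * ((N:ℝ) - 1)
    rw [show N - (N - 2) = 2 from by omega]
    rw [Nat.cast_sub (by omega : 2 ≤ N)]
    push_cast
    ring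
  have hNR : (2:ℝ) ≤ (N:ℝ) := by exact_mod_cast hN2
  -- master inequality
  have master : ∀ u v : ℝ, u ≤ M → v ≤ c → 0 ≤ v →
      u * (1 + ε * 2 * ((N:ℝ) - 1)) + v * (1 + ε * N) < 2 * M * (1 + ε * N) := by
    intro u v hu hv hv0
    have h1 : (0:ℝ) < 1 + ε * 2 * ((N:ℝ) - 1) := by nlinarith
    have h2 : (0:ℝ) < 1 + ε * N := by nlinarith
    have step1 : u * (1 + ε * 2 * ((N:ℝ) - 1)) + v * (1 + ε * N)
        ≤ M * (1 + ε * 2 * ((N:ℝ) - 1)) + c * (1 + ε * N) := by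
      have := mul_le_mul_of_nonneg_right hu h1.le
      have := mul_le_mul_of_nonneg_right hv h2.le
      linarith
    have step2 : M * (1 + ε * 2 * ((N:ℝ) - 1)) + c * (1 + ε * N) < 2 * M * (1 + ε * N) := by
      nlinarith [hεq, mul_pos hεpos hM0]
    linarith
  -- KEY inequality
  have KEY : ∀ k, ‖a (k+1)‖ * w (k+2) + ‖a k‖ * w k < 2 * M * w (k+1) := by
    intro k
    have hr := hpN k
    have ew0 : w k = W (p k) := rfl
    have ew1 : w (k+1) = W (p (k+1)) := rfl
    have ew2 : w (k+2) = W (p (k+2)) := rfl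
    rcases (show p k = N - 1 ∨ p k = N - 2 ∨ p k + 3 ≤ N from by omega) with hcase | hcase | hcase
    · -- p k = N-1 : center at offset 0
      have e1 : p (k+1) = 0 := by
        rw [hstep k, hcase, show N - 1 + 1 = N from by omega, Nat.mod_self]
      have e2 : p (k+2) = 1 := by
        rw [show k + 2 = (k+1) + 1 from rfl, hstep (k+1), e1]
        exact Nat.mod_eq_of_lt (by omega)
      rw [ew0, ew1, ew2, hcase, e1, e2, hW0, hW1, hWN1]
      exact master _ _ (hble (k+1)) (le_of_eq (hak0 k hcase)) (norm_nonneg _)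
    · -- p k = N-2 : center at offset N-1
      have e1 : p (k+1) = N - 1 := by
        rw [hstep k, hcase, show N - 2 + 1 = N - 1 from by omega]
        exact Nat.mod_eq_of_lt (by omega)
      have e2 : p (k+2) = 0 := by
        rw [show k + 2 = (k+1) + 1 from rfl, hstep (k+1), e1,
          show N - 1 + 1 = N from by omega, Nat.mod_self]
      rw [ew0, ew1, ew2, hcase, e1, e2, hW0, hWN1, hWN2]
      rw [show ‖a (k+1)‖ * (1 + ε * ↑N) + ‖a k‖ * (1 + ε * 2 * ((N:ℝ) - 1))
          = ‖a k‖ * (1 + ε * 2 * ((N:ℝ) - 1)) + ‖a (k+1)‖ * (1 + ε * ↑N) from by ring]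
      exact master _ _ (hble k) (le_of_eq (hak0 (k+1) e1)) (norm_nonneg _)
    · -- interior
      have e1 : p (k+1) = p k + 1 := by
        rw [hstep k]
        exact Nat.mod_eq_of_lt (by omega)
      have e2 : p (k+2) = p k + 2 := by
        rw [show k + 2 = (k+1) + 1 from rfl, hstep (k+1), e1]
        exact Nat.mod_eq_of_lt (by omega)
      rw [ew0, ew1, ew2, e1, e2]
      have c0 : ((N - p k : ℕ) : ℝ) = (N:ℝ) - p k := by
        rw [Nat.cast_sub (by omega)]
      have c1 : ((N - (p k + 1) : ℕ) : ℝ) = (N:ℝ) - p k - 1 := by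
        rw [Nat.cast_sub (by omega)]; push_cast; ring
      have c2 : ((N - (p k + 2) : ℕ) : ℝ) = (N:ℝ) - p k - 2 := by
        rw [Nat.cast_sub (by omega)]; push_cast; ring
      have hid : W (p k + 2) + W (p k) = 2 * W (p k + 1) - 2 * ε := by
        show (1 + ε * (((p k + 2 : ℕ) : ℝ) + 1) * ((N - (p k + 2) : ℕ) : ℝ))
            + (1 + ε * (((p k : ℕ) : ℝ) + 1) * ((N - p k : ℕ) : ℝ))
            = 2 * (1 + ε * (((p k + 1 : ℕ) : ℝ) + 1) * ((N - (p k + 1) : ℕ) : ℝ)) - 2 * ε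
        rw [c0, c1, c2]
        push_cast
        ring
      have hb1 : ‖a (k+1)‖ * W (p k + 2) ≤ M * W (p k + 2) :=
        mul_le_mul_of_nonneg_right (hble _) (hWnn _).le
      have hb0 : ‖a k‖ * W (p k) ≤ M * W (p k) :=
        mul_le_mul_of_nonneg_right (hble _) (hWnn _).le
      have : M * (W (p k + 2) + W (p k)) < 2 * M * W (p k + 1) := by
        rw [hid]
        nlinarith [mul_pos hεpos hM0]
      nlinarith
  -- the bound B
  set Q : ℕ → ℝ := fun m => ‖a (m+1)‖ * w (m+2) / (2 * w (m+1)) + ‖a m‖ * w m / (2 * w (m+1))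
    with hQ
  have hQnn : ∀ m, 0 ≤ Q m := by
    intro m
    have := hw m; have := hw (m+1); have := hw (m+2)
    have := norm_nonneg (a m); have := norm_nonneg (a (m+1))
    show 0 ≤ ‖a (m+1)‖ * w (m+2) / (2 * w (m+1)) + ‖a m‖ * w m / (2 * w (m+1))
    positivity
  have hQper : ∀ k, Q (k + N) = Q k := by
    intro k
    show ‖a (k + N + 1)‖ * w (k + N + 2) / (2 * w (k + N + 1))
        + ‖a (k + N)‖ * w (k + N) / (2 * w (k + N + 1))
      = ‖a (k+1)‖ * w (k+2) / (2 * w (k+1)) + ‖a k‖ * w k / (2 * w (k+1))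
    rw [show k + N + 1 = (k + 1) + N from by omega, show k + N + 2 = (k + 2) + N from by omega,
      hper, hbper, hwper, hwper, hwper]
  set B : ℝ := (Finset.range N).sup' (Finset.nonempty_range_iff.mpr hN.ne') Q with hB
  have hQB : ∀ k, Q k ≤ B := by
    intro k
    have h1 : Q k = Q (k % N) := per_mod Q N hQper k
    rw [h1, hB]
    exact Finset.le_sup' Q (Finset.mem_range.mpr (Nat.mod_lt _ hN))
  have hq0 : ‖a 0‖ * w 1 / (2 * w 0) ≤ B := by
    have h1 : Q (N - 1) = ‖a 0‖ * w 1 / (2 * w 0) + ‖a (N-1)‖ * w (N-1) / (2 * w 0) := by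
      show ‖a (N - 1 + 1)‖ * w (N - 1 + 2) / (2 * w (N - 1 + 1))
          + ‖a (N-1)‖ * w (N-1) / (2 * w (N - 1 + 1)) = _
      rw [show N - 1 + 1 = 0 + N from by omega, show N - 1 + 2 = 1 + N from by omega,
        hper, hwper, hwper]
    have h2 : 0 ≤ ‖a (N-1)‖ * w (N-1) / (2 * w 0) := by
      have := hw (N-1); have := hw 0; positivity
    have := hQB (N - 1)
    rw [h1] at this
    linarith
  have hBM : B < M := by
    rw [hB]
    rw [Finset.sup'_lt_iff]
    intro m _
    show ‖a (m+1)‖ * w (m+2) / (2 * w (m+1)) + ‖a m‖ * w m / (2 * w (m+1)) < M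
    rw [← add_div, div_lt_iff₀ (by have := hw (m+1); linarith)]
    have := KEY m
    linarith
  have hB0 : 0 ≤ B := le_trans (hQnn 0) (hQB 0)
  -- apply the bound
  set C : ℝ := M * (1 + ε * N * N) / 2 with hC
  have hCbound : ∀ k, ‖a k‖ * w (k+1) / (2 * w k) ≤ C ∧ ‖a k‖ * w k / (2 * w (k+1)) ≤ C := by
    intro k
    have hWBnn : (0:ℝ) ≤ 1 + ε * N * N := by positivity
    constructor
    · rw [hC]
      apply div_le_div₀ (by positivity)
        (mul_le_mul (hble k) (hwB (k+1)) (hw (k+1)).le hM0.le) two_pos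
      linarith [hw1 k]
    · rw [hC]
      apply div_le_div₀ (by positivity)
        (mul_le_mul (hble k) (hwB k) (hw k).le hM0.le) two_pos
      linarith [hw1 (k+1)]
  have hbound : ∀ z ∈ numRange a, ‖z‖ ≤ B :=
    numRange_bound a w hw B C hCbound hq0 (fun k => hQB k)
  have hbdd : BddAbove ((fun z : ℂ => ‖z‖) '' numRange a) := by
    refine ⟨B, ?_⟩
    rintro y ⟨z, hz, rfl⟩
    exact hbound z hz
  have hRadB : numRad a ≤ B := by
    apply Real.sSup_le _ hB0
    rintro y ⟨z, hz, rfl⟩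
    exact hbound z hz
  -- Part 2: avg ≤ numRad
  set S : ℝ := ∑ k ∈ Finset.range N, ‖a k‖ with hS
  have hpart2 : S / N ≤ numRad a := by
    have hmem : ∀ n : ℕ, S / N - (M / N) * (1 / (n+1)) ≤ numRad a := by
      intro n
      set m : ℕ := (n + 1) * N with hm
      have hmpos : 0 < m := by positivity
      obtain ⟨z, hzmem, hznorm⟩ := avg_mem a m hmpos
      have hzle : ‖z‖ ≤ numRad a := le_csSup hbdd (Set.mem_image_of_mem _ hzmem)
      have hsplit : ∑ k ∈ Finset.range m, ‖a k‖
          = ∑ k ∈ Finset.range (m-1), ‖a k‖ + ‖a (m-1)‖ := by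
        rw [show m = (m - 1) + 1 from by omega]
        rw [Finset.sum_range_succ]
        congr 1 <;> rw [show (m-1) + 1 - 1 = m - 1 from by omega]
      have hsm : ∑ k ∈ Finset.range m, ‖a k‖ = ((n:ℝ)+1) * S := by
        rw [hm]
        have h := per_sum (fun k => ‖a k‖) N hbper (n+1)
        push_cast at h
        exact h
      have hnormval : ‖z‖ = ((n+1) * S - ‖a (m-1)‖) / m := by
        rw [hznorm]
        congr 1
        rw [← hsm, hsplit]
        ring
      have hml : ‖a (m-1)‖ ≤ M := hble _
      have hmR : (m : ℝ) = ((n:ℝ)+1) * N := by rw [hm]; push_cast; ring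
      have hfin : S / N - (M / N) * (1 / (n+1)) ≤ ‖z‖ := by
        rw [hnormval, hmR]
        have hNpos : (0:ℝ) < N := by exact_mod_cast hN
        have hn1 : (0:ℝ) < (n:ℝ) + 1 := by positivity
        have heq : S / N - (M / N) * (1 / ((n:ℝ)+1)) = (((n:ℝ)+1) * S - M) / (((n:ℝ)+1) * N) := by
          field_simp
        rw [heq, div_le_div_iff₀ (by positivity) (by positivity)]
        nlinarith [hml, mul_pos (show (0:ℝ) < (n:ℝ)+1 by positivity) hNpos]
      linarith
    have htend : Tendsto (fun n : ℕ => S / N - (M / N) * (1 / (n+1))) atTop (𝓝 (S / N)) := by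
      have h1 : Tendsto (fun n : ℕ => (M / N) * (1 / ((n:ℝ)+1))) atTop (𝓝 0) := by
        have : Tendsto (fun n : ℕ => 1 / ((n : ℝ) + 1)) atTop (𝓝 0) :=
          tendsto_one_div_add_atTop_nhds_zero_nat
        have h2 := this.const_mul (M / N)
        simpa using h2
      have h3 : Tendsto (fun _ : ℕ => S / N) atTop (𝓝 (S / N)) := tendsto_const_nhds
      have := h3.sub h1
      simpa using this
    exact le_of_tendsto htend (Filter.Eventually.of_forall hmem)
  refine ⟨?_, hpart2, lt_of_le_of_lt hRadB hBM⟩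
  exact amgm_strict (fun k => ‖a k‖) (fun k => norm_nonneg _) N hN i j hi hj hij hne
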